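/- arXiv:2004.08619 — 12 statements merged into one kernel-verified Lean document; each statement's English description precedes it below -/
import Mathlib

section
/- In the n-th Engel-type algebra with n ≥ 2, the subspace span{Y_1,...,Y_n} is the unique abelian n-dimensional subspace of the first layer V_1 = span{X, Y_1,...,Y_n}. -/
abbrev EngelVec (n : ℕ) : Type := ℝ × (Fin n → ℝ) × (Fin n → ℝ) × ℝ
noncomputable def engelBracket (n : ℕ) (u v : EngelVec n) : EngelVec n :=
  (0, 0,
    fun i => u.2.1 i * v.1 - v.2.1 i * u.1,
    ∑ i : Fin n, (u.2.1 i * v.2.2.1 i - v.2.1 i * u.2.2.1 i))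

noncomputable instance (n : ℕ) : LieRing (EngelVec n) :=
  { (inferInstance : AddCommGroup (EngelVec n)) with
    bracket := engelBracket n
    add_lie := by
      intro x y z
      refine Prod.ext ?_ (Prod.ext ?_ (Prod.ext ?_ ?_)) <;>
        first
          | (simp [engelBracket]; done)
          | (funext i; simp [engelBracket]; done)
          | (funext i; simp [engelBracket]; ring)
          | (simp [engelBracket, mul_add, add_mul, Finset.sum_sub_distrib,
              Finset.sum_add_distrib]; ring)
    lie_add := by
      intro x y z
      refine Prod.ext ?_ (Prod.ext ?_ (Prod.ext ?_ ?_)) <;>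
        first
          | (simp [engelBracket]; done)
          | (funext i; simp [engelBracket]; done)
          | (funext i; simp [engelBracket]; ring)
          | (simp [engelBracket, mul_add, add_mul, Finset.sum_sub_distrib,
              Finset.sum_add_distrib]; ring)
    lie_self := by
      intro x
      refine Prod.ext ?_ (Prod.ext ?_ (Prod.ext ?_ ?_)) <;>
        first
          | (simp [engelBracket]; done)
          | (funext i; simp [engelBracket]; done)
          | (funext i; simp [engelBracket]; ring)
          | (simp [engelBracket]; ring)
    leibniz_lie := by
      intro x y z
      refine Prod.ext ?_ (Prod.ext ?_ (Prod.ext ?_ ?_)) <;>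
        first
          | (simp [engelBracket]; done)
          | (funext i; simp [engelBracket]; done)
          | (funext i; simp [engelBracket]; ring)
          | (simp [engelBracket, mul_sub, sub_mul, mul_comm, mul_left_comm,
              Finset.sum_sub_distrib]; ring) }

noncomputable instance (n : ℕ) : LieAlgebra ℝ (EngelVec n) :=
  { (inferInstance : Module ℝ (EngelVec n)) with
    lie_smul := by
      intro c x y
      refine Prod.ext ?_ (Prod.ext ?_ (Prod.ext ?_ ?_)) <;>
        first
          | (simp [Bracket.bracket, engelBracket]; done)
          | (funext i; simp [Bracket.bracket, engelBracket]; ring)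
          | (simp [Bracket.bracket, engelBracket, mul_sub, mul_add, Finset.mul_sum,
              mul_comm, mul_left_comm, Finset.sum_sub_distrib];
             exact Finset.sum_congr rfl fun i _ => by ring) }

noncomputable def engelX (n : ℕ) : EngelVec n := (1, 0, 0, 0)
noncomputable def engelY (n : ℕ) (i : Fin n) : EngelVec n := (0, Pi.single i 1, 0, 0)
noncomputable def engelT (n : ℕ) (i : Fin n) : EngelVec n := (0, 0, Pi.single i 1, 0)
noncomputable def engelZ (n : ℕ) : EngelVec n := (0, 0, 0, 1)

/-- The first layer `V₁ = span{X, Y₁, …, Yₙ}` of the `n`-th Engel-type algebra. -/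
noncomputable def engelV1 (n : ℕ) : Submodule ℝ (EngelVec n) :=
  Submodule.span ℝ ({engelX n} ∪ Set.range (engelY n))

/-- The second layer `V₂ = span{T₁, …, Tₙ}`. -/
noncomputable def engelV2 (n : ℕ) : Submodule ℝ (EngelVec n) :=
  Submodule.span ℝ (Set.range (engelT n))

/-- The third layer `V₃ = ℝZ`. -/
noncomputable def engelV3 (n : ℕ) : Submodule ℝ (EngelVec n) :=
  Submodule.span ℝ {engelZ n}

/-- The subspace `span{Y₁, …, Yₙ}` of the first layer. -/
noncomputable def engelYspan (n : ℕ) : Submodule ℝ (EngelVec n) :=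
  Submodule.span ℝ (Set.range (engelY n))


/-! On the first layer the bracket is `⁅(a, y), (b, z)⁆ = b • y - a • z ∈ V₂`. So if an abelian
subspace `H ⊆ V₁` contains a vector `v` with nonzero `X`-coordinate, then commuting with `v`
forces every `w ∈ H` to be determined by its `X`-coordinate, and `dim H ≤ 1`. Hence for
`n ≥ 2` an abelian `H` of dimension `n` lies in `span{Y₁, …, Yₙ}`, which has dimension `n`. -/

section

variable {n : ℕ}

theorem smul_engelX_add_sum_smul_engelY (a : ℝ) (y : Fin n → ℝ) :
    (a • engelX n + ∑ i, y i • engelY n i : EngelVec n) = (a, y, 0) := by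
  refine Prod.ext ?_ (Prod.ext ?_ ?_)
  · simp [engelX, engelY, Prod.fst_sum]
  · funext j
    simp [engelX, engelY, Prod.fst_sum, Prod.snd_sum, Finset.sum_apply, Pi.single_apply]
  · simp [engelX, engelY, Prod.snd_sum]

theorem mem_engelV1_iff {v : EngelVec n} : v ∈ engelV1 n ↔ v.2.2 = 0 := by
  constructor
  · intro hv
    have hker : engelV1 n ≤ LinearMap.ker
        (LinearMap.snd ℝ _ _ ∘ₗ LinearMap.snd ℝ ℝ ((Fin n → ℝ) × (Fin n → ℝ) × ℝ)) := by
      rw [engelV1, Submodule.span_le]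
      rintro _ (rfl | ⟨i, rfl⟩) <;> simp [engelX, engelY]
    exact hker hv
  · intro hv
    rw [show v = (v.1, v.2.1, 0) from Prod.ext rfl (Prod.ext rfl hv),
      ← smul_engelX_add_sum_smul_engelY]
    exact add_mem (Submodule.smul_mem _ _ (Submodule.subset_span (Or.inl rfl)))
      (sum_mem fun i _ => Submodule.smul_mem _ _ (Submodule.subset_span (Or.inr ⟨i, rfl⟩)))

theorem mem_engelYspan_iff {v : EngelVec n} : v ∈ engelYspan n ↔ v.1 = 0 ∧ v.2.2 = 0 := by
  constructor
  · intro hv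
    have hker : engelYspan n ≤ LinearMap.ker
        (LinearMap.prod (LinearMap.fst ℝ _ _)
          (LinearMap.snd ℝ _ _ ∘ₗ LinearMap.snd ℝ ℝ ((Fin n → ℝ) × (Fin n → ℝ) × ℝ))) := by
      rw [engelYspan, Submodule.span_le]
      rintro _ ⟨i, rfl⟩
      simp [engelY]
    simpa [Prod.ext_iff] using hker hv
  · rintro ⟨ha, ht⟩
    rw [show v = (0, v.2.1, 0) from Prod.ext ha (Prod.ext rfl ht),
      ← smul_engelX_add_sum_smul_engelY, zero_smul, zero_add]
    exact sum_mem fun i _ => Submodule.smul_mem _ _ (Submodule.subset_span ⟨i, rfl⟩)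

theorem engelYspan_le_engelV1 : engelYspan n ≤ engelV1 n :=
  fun _ hv => mem_engelV1_iff.2 (mem_engelYspan_iff.1 hv).2

theorem linearIndependent_engelY : LinearIndependent ℝ (engelY n) := by
  refine LinearIndependent.of_comp (LinearMap.fst ℝ _ _ ∘ₗ LinearMap.snd ℝ ℝ _) ?_
  convert (Pi.basisFun ℝ (Fin n)).linearIndependent using 1
  funext i
  simp [engelY]

theorem finrank_engelYspan : Module.finrank ℝ (engelYspan n) = n :=
  (finrank_span_eq_card linearIndependent_engelY).trans (Fintype.card_fin n)

theorem lie_eq_of_mem_engelV1 {u v : EngelVec n} (hu : u ∈ engelV1 n) (hv : v ∈ engelV1 n) :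
    ⁅u, v⁆ = (0, 0, v.1 • u.2.1 - u.1 • v.2.1, 0) := by
  rw [mem_engelV1_iff] at hu hv
  change engelBracket n u v = _
  refine Prod.ext rfl (Prod.ext rfl (Prod.ext ?_ ?_))
  · funext i
    simp only [engelBracket, Pi.sub_apply, Pi.smul_apply, smul_eq_mul]
    ring
  · simp [engelBracket, hu, hv]

theorem lie_eq_zero_of_mem_engelYspan {u v : EngelVec n} (hu : u ∈ engelYspan n)
    (hv : v ∈ engelYspan n) : ⁅u, v⁆ = 0 := by
  rw [lie_eq_of_mem_engelV1 (engelYspan_le_engelV1 hu) (engelYspan_le_engelV1 hv),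
    (mem_engelYspan_iff.1 hu).1, (mem_engelYspan_iff.1 hv).1]
  simp

theorem eq_zero_of_lie_eq_zero_of_fst_eq_zero {v w : EngelVec n} (hv : v ∈ engelV1 n)
    (hw : w ∈ engelV1 n) (hv₁ : v.1 ≠ 0) (hw₁ : w.1 = 0) (hvw : ⁅v, w⁆ = 0) : w = 0 := by
  rw [lie_eq_of_mem_engelV1 hv hw, hw₁, zero_smul, zero_sub] at hvw
  have hwy : w.2.1 = 0 := by simpa [hv₁] using congrArg (fun p : EngelVec n => p.2.2.1) hvw
  exact Prod.ext hw₁ (Prod.ext hwy (mem_engelV1_iff.1 hw))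

theorem finrank_le_one_of_lie_eq_zero {H : Submodule ℝ (EngelVec n)} (hH : H ≤ engelV1 n)
    {v : EngelVec n} (hv : v ∈ engelV1 n) (hv₁ : v.1 ≠ 0) (hvH : ∀ w ∈ H, ⁅v, w⁆ = 0) :
    Module.finrank ℝ H ≤ 1 := by
  let f : H →ₗ[ℝ] ℝ := LinearMap.fst ℝ _ _ ∘ₗ H.subtype
  have hf : Function.Injective f := by
    refine (injective_iff_map_eq_zero f).2 fun w hw => Subtype.ext ?_
    exact eq_zero_of_lie_eq_zero_of_fst_eq_zero hv (hH w.2) hv₁ hw (hvH w w.2)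
  simpa using LinearMap.finrank_le_finrank_of_injective hf

theorem le_engelYspan_of_lie_eq_zero {H : Submodule ℝ (EngelVec n)} (hH : H ≤ engelV1 n)
    (hrank : 2 ≤ Module.finrank ℝ H) (hab : ∀ u ∈ H, ∀ v ∈ H, ⁅u, v⁆ = 0) :
    H ≤ engelYspan n := by
  intro v hv
  refine mem_engelYspan_iff.2 ⟨?_, mem_engelV1_iff.1 (hH hv)⟩
  by_contra hv₁
  have := finrank_le_one_of_lie_eq_zero hH (hH hv) hv₁ (hab v hv)
  omega

end

/-- In the `n`-th Engel-type algebra with `n ≥ 2`, the subspace `span{Y₁,…,Yₙ}` is the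
unique abelian `n`-dimensional subspace of the first layer `V₁ = span{X, Y₁,…,Yₙ}`. -/
theorem engel_unique_abelian_subspace (n : ℕ) (hn : 2 ≤ n) :
    (engelYspan n ≤ engelV1 n) ∧
    (Module.finrank ℝ ↥(engelYspan n) = n) ∧
    (∀ u ∈ engelYspan n, ∀ v ∈ engelYspan n, ⁅u, v⁆ = (0 : EngelVec n)) ∧
    (∀ H : Submodule ℝ (EngelVec n), H ≤ engelV1 n → Module.finrank ℝ ↥H = n →
      (∀ u ∈ H, ∀ v ∈ H, ⁅u, v⁆ = (0 : EngelVec n)) → H = engelYspan n) := by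
  refine ⟨engelYspan_le_engelV1, finrank_engelYspan,
    fun u hu v hv => lie_eq_zero_of_mem_engelYspan hu hv, fun H hH hrank hab => ?_⟩
  exact Submodule.eq_of_le_of_finrank_eq (le_engelYspan_of_lie_eq_zero hH (by omega) hab)
    (hrank.trans finrank_engelYspan.symm)
end

section
/- In the n-th Engel-type algebra, the line ℝX is the unique horizontal line (one-dimensional subspace of V_1) ℝν satisfying [ℝν, V_2] = {0}. -/
/-! Bracketing with `Tᵢ` lands in `ℝZ` with coefficient the `Yᵢ`-coordinate, so `ν` centralises
`V₂` exactly when its `Y`-part vanishes, while the `Y`-part is the only thing that can make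
an element of `V₁` fail to be a multiple of `X`. -/

namespace EngelVec

variable {n : ℕ}

theorem snd_snd_eq_zero_of_mem_engelV1 {ν : EngelVec n} (hν : ν ∈ engelV1 n) : ν.2.2 = 0 := by
  induction hν using Submodule.span_induction with
  | mem v hv => rcases hv with rfl | ⟨i, rfl⟩ <;> rfl
  | zero => rfl
  | add u v _ _ hu hv => simp [hu, hv]
  | smul a v _ hv => simp [hv]

theorem snd_fst_eq_zero_of_mem_engelV2 {w : EngelVec n} (hw : w ∈ engelV2 n) : w.2.1 = 0 := by
  induction hw using Submodule.span_induction with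
  | mem v hv => obtain ⟨i, rfl⟩ := hv; rfl
  | zero => rfl
  | add u v _ _ hu hv => simp [hu, hv]
  | smul a v _ hv => simp [hv]

theorem engelT_mem_engelV2 (i : Fin n) : engelT n i ∈ engelV2 n :=
  Submodule.subset_span ⟨i, rfl⟩

theorem lie_engelT_snd_snd_snd (ν : EngelVec n) (i : Fin n) :
    ⁅ν, engelT n i⁆.2.2.2 = ν.2.1 i := by
  simp [Bracket.bracket, engelBracket, engelT, Pi.single_apply]

theorem lie_eq_zero_of_snd_fst_eq_zero {u v : EngelVec n} (hu : u.2.1 = 0) (hv : v.2.1 = 0) :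
    ⁅u, v⁆ = 0 := by
  ext <;> simp [Bracket.bracket, engelBracket, hu, hv]

theorem forall_lie_engelV2_eq_zero_iff (ν : EngelVec n) :
    (∀ w ∈ engelV2 n, ⁅ν, w⁆ = 0) ↔ ν.2.1 = 0 := by
  refine ⟨fun h => funext fun i => ?_, fun hν w hw =>
    lie_eq_zero_of_snd_fst_eq_zero hν (snd_fst_eq_zero_of_mem_engelV2 hw)⟩
  rw [← lie_engelT_snd_snd_snd, h _ (engelT_mem_engelV2 i)]
  rfl

theorem snd_fst_eq_zero_iff_exists_eq_smul_engelX {ν : EngelVec n} (hν : ν ∈ engelV1 n) :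
    ν.2.1 = 0 ↔ ∃ a : ℝ, ν = a • engelX n := by
  constructor
  · intro h
    exact ⟨ν.1, by ext <;> simp [engelX, h, snd_snd_eq_zero_of_mem_engelV1 hν]⟩
  · rintro ⟨a, rfl⟩
    simp [engelX]

end EngelVec

theorem engel_unique_line_commuting_with_V2_general (n : ℕ) (ν : EngelVec n)
    (hν : ν ∈ engelV1 n) :
    (∀ w ∈ engelV2 n, ⁅ν, w⁆ = (0 : EngelVec n)) ↔ ∃ a : ℝ, ν = a • engelX n :=
  (EngelVec.forall_lie_engelV2_eq_zero_iff ν).trans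
    (EngelVec.snd_fst_eq_zero_iff_exists_eq_smul_engelX hν)

/-- In the `n`-th Engel-type algebra, the line `ℝX` is the unique horizontal line
(one-dimensional subspace of `V₁`) `ℝν` satisfying `[ℝν, V₂] = {0}`: a nonzero
`ν ∈ V₁` bracket-annihilates `V₂` if and only if `ν` is a multiple of `X`. -/
theorem engel_unique_line_commuting_with_V2 (n : ℕ) (ν : EngelVec n)
    (hν : ν ∈ engelV1 n) (hν0 : ν ≠ 0) :
    (∀ w ∈ engelV2 n, ⁅ν, w⁆ = (0 : EngelVec n)) ↔ ∃ a : ℝ, ν = a • engelX n :=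
  engel_unique_line_commuting_with_V2_general n ν hν
end

section
/- In the n-th Engel-type algebra, for every nonzero Y ∈ span{Y_1,...,Y_n}, one has ad_Y^2(V_1) = ℝZ, i.e., the set {[Y,[Y,V]] : V ∈ V_1} spans exactly the line ℝZ. -/

lemma engelYspan_prop (n : ℕ) (Y : EngelVec n) (hY : Y ∈ engelYspan n) :
    Y.1 = 0 ∧ Y.2.2 = 0 := by
  induction hY using Submodule.span_induction with
  | mem x hx =>
      obtain ⟨i, rfl⟩ := hx
      simp [engelY]
  | zero => simp
  | add x y _ _ hx hy =>
      exact ⟨by simp [hx.1, hy.1], by simp [Prod.add_def, hx.2, hy.2]⟩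
  | smul c x _ hx =>
      exact ⟨by simp [hx.1], by simp [Prod.smul_def, hx.2]⟩

lemma engel_adsq (n : ℕ) (Y v : EngelVec n) (h1 : Y.1 = 0) :
    ⁅Y, ⁅Y, v⁆⁆ = (v.1 * ∑ i, Y.2.1 i ^ 2) • engelZ n := by
  show engelBracket n Y (engelBracket n Y v) = _
  refine Prod.ext ?_ (Prod.ext ?_ (Prod.ext ?_ ?_))
  · simp [engelBracket, engelZ]
  · simp [engelBracket, engelZ]
  · funext i; simp [engelBracket, engelZ, h1]
  · simp [engelBracket, engelZ, h1, Finset.mul_sum]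
    exact Finset.sum_congr rfl fun i _ => by ring

/-- In the `n`-th Engel-type algebra, for every nonzero `Y ∈ span{Y₁,…,Yₙ}` one has
`ad_Y²(V₁) = ℝZ`: the set `{[Y,[Y,V]] : V ∈ V₁}` is exactly the line `ℝZ`. -/
theorem engel_adsq_of_Y_eq_lineZ (n : ℕ) (Y : EngelVec n)
    (hY : Y ∈ engelYspan n) (hY0 : Y ≠ 0) :
    {w : EngelVec n | ∃ v ∈ engelV1 n, ⁅Y, ⁅Y, v⁆⁆ = w} =
      {w : EngelVec n | ∃ c : ℝ, w = c • engelZ n} := by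
  obtain ⟨h1, h2⟩ := engelYspan_prop n Y hY
  set S := ∑ i, Y.2.1 i ^ 2 with hS
  have hy : Y.2.1 ≠ 0 := fun hy => hY0 (Prod.ext h1 (Prod.ext hy h2))
  obtain ⟨i, hi⟩ := Function.ne_iff.mp hy
  have hSpos : 0 < S :=
    Finset.sum_pos' (fun j _ => sq_nonneg _)
      ⟨i, Finset.mem_univ i, lt_of_le_of_ne (sq_nonneg _) (Ne.symm (pow_ne_zero 2 hi))⟩
  ext w
  simp only [Set.mem_setOf_eq]
  constructor
  · rintro ⟨v, -, rfl⟩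
    exact ⟨v.1 * S, (engel_adsq n Y v h1).symm ▸ (engel_adsq n Y v h1)⟩
  · rintro ⟨c, rfl⟩
    refine ⟨(c / S) • engelX n, Submodule.smul_mem _ _ (Submodule.subset_span (Or.inl rfl)), ?_⟩
    rw [engel_adsq n Y _ h1]
    have h3 : ((c / S) • engelX n).1 = c / S := by simp [engelX]
    rw [h3, div_mul_cancel₀ _ (ne_of_gt hSpos)]
end

section
/- Every Engel-type algebra is trimmed: for each n ≥ 1, the center of the n-th Engel-type algebra is one-dimensional, equal to ℝZ. -/
/-! Bracketing with `X` reads off the `Yᵢ`-coordinates of an element, and bracketing with `Yᵢ`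
reads off its `X`- and `Tᵢ`-coordinates; so a central element is a multiple of `Z`, while `Z`
itself is central. -/

namespace EngelVec

variable {n : ℕ}

theorem lie_def (u v : EngelVec n) : ⁅u, v⁆ = engelBracket n u v := rfl

theorem engelX_lie (x : EngelVec n) : ⁅engelX n, x⁆ = (0, 0, -x.2.1, 0) := by
  ext <;> simp [lie_def, engelBracket, engelX]

theorem engelY_lie (i : Fin n) (x : EngelVec n) :
    ⁅engelY n i, x⁆ = (0, 0, Pi.single i x.1, x.2.2.1 i) := by
  ext k <;> simp [lie_def, engelBracket, engelY, Pi.single_apply]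

theorem lie_engelZ (x : EngelVec n) : ⁅x, engelZ n⁆ = 0 := by
  ext <;> simp [lie_def, engelBracket, engelZ]

theorem engelZ_ne_zero : engelZ n ≠ 0 := by
  simp [engelZ]

theorem engelZ_mem_center : engelZ n ∈ LieAlgebra.center ℝ (EngelVec n) :=
  (LieModule.mem_maxTrivSubmodule ℝ _ _ _).mpr lie_engelZ

theorem eq_smul_engelZ_of_mem_center (hn : 0 < n) {x : EngelVec n}
    (hx : x ∈ LieAlgebra.center ℝ (EngelVec n)) : x = x.2.2.2 • engelZ n := by
  have hlie (y : EngelVec n) : ⁅y, x⁆ = 0 := (LieModule.mem_maxTrivSubmodule ℝ _ _ x).mp hx y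
  have hxY : x.2.1 = 0 := by simpa [engelX_lie] using hlie (engelX n)
  have hxXT (i : Fin n) : x.1 = 0 ∧ x.2.2.1 i = 0 := by simpa [engelY_lie] using hlie (engelY n i)
  ext i
  · simpa [engelZ] using (hxXT ⟨0, hn⟩).1
  all_goals simp [engelZ, hxY, (hxXT _).2]

theorem center_eq_span_engelZ (hn : 0 < n) :
    (LieAlgebra.center ℝ (EngelVec n)).toSubmodule = Submodule.span ℝ {engelZ n} := by
  refine le_antisymm (fun x hx => ?_) ?_
  · rw [eq_smul_engelZ_of_mem_center hn hx]
    exact Submodule.smul_mem _ _ (Submodule.mem_span_singleton_self _)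
  · exact Submodule.span_le.mpr (Set.singleton_subset_iff.mpr engelZ_mem_center)

end EngelVec

/-- Every Engel-type algebra is trimmed: for each `n ≥ 1`, the center of the `n`-th
Engel-type algebra is one-dimensional, equal to `ℝZ`. -/
theorem engel_center_is_one_dimensional (n : ℕ) (hn : 1 ≤ n) :
    Module.finrank ℝ ↥(LieAlgebra.center ℝ (EngelVec n)) = 1 ∧
    (LieAlgebra.center ℝ (EngelVec n)).toSubmodule = Submodule.span ℝ {engelZ n} := by
  have hcenter := EngelVec.center_eq_span_engelZ hn
  refine ⟨?_, hcenter⟩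
  change Module.finrank ℝ (LieAlgebra.center ℝ (EngelVec n)).toSubmodule = 1
  rw [hcenter]
  exact finrank_span_singleton EngelVec.engelZ_ne_zero
end

section
/- For a stratified Lie algebra g of nilpotency step s, the following are equivalent: (b) V_s ⊆ i for every nontrivial ideal i of g; (c) dim Z(g) = 1, where Z(g) is the center of g. -/
/-- The span of all brackets `⁅x, y⁆` with `x ∈ A` and `y ∈ B`. -/
def lieSpan {L : Type} [LieRing L] [LieAlgebra ℝ L] (A B : Submodule ℝ L) :
    Submodule ℝ L :=
  Submodule.span ℝ {z : L | ∃ x ∈ A, ∃ y ∈ B, z = ⁅x, y⁆}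

/-- A stratification of step `s` on a Lie algebra `L`: a decomposition
`L = V 1 ⊕ ⋯ ⊕ V s` (the direct sum being recorded by spanning and independence)
with `[V 1, V j] = V (j+1)` for `1 ≤ j < s`, `[V 1, V s] = 0` and `V s ≠ 0`.
Layers of index `0` or `> s` are trivial. -/
structure IsStratified (L : Type) [LieRing L] [LieAlgebra ℝ L]
    (s : ℕ) (V : ℕ → Submodule ℝ L) : Prop where
  pos : 0 < s
  last_ne_bot : V s ≠ ⊥
  zero_bot : V 0 = ⊥
  gt_bot : ∀ j, s < j → V j = ⊥
  iSup_eq_top : (⨆ j, V j) = ⊤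
  indep : ∀ j, Disjoint (V j) (⨆ k, ⨆ _ : k ≠ j, V k)
  layer : ∀ j, 1 ≤ j → j < s → lieSpan (V 1) (V j) = V (j + 1)
  last : lieSpan (V 1) (V s) = ⊥

/-! The grading `[V i, V j] ⊆ V (i + j)` makes `L` nilpotent and puts `V s` in the centre `Z`.
In a nilpotent Lie algebra every nonzero ideal contains a nonzero central element `z`, while the
line through a central `z` is itself an ideal; so `V s` lies in every nonzero ideal iff
`V s ≤ ℝ ∙ z` for every nonzero `z ∈ Z`. As `0 ≠ V s ≤ Z`, this happens iff `Z` is a line. -/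

theorem Submodule.forall_le_span_singleton_iff_finrank_eq_one {K M : Type*} [DivisionRing K]
    [AddCommGroup M] [Module K M] {W Z : Submodule K M} (hWZ : W ≤ Z) (hW : W ≠ ⊥) :
    (∀ z ∈ Z, z ≠ 0 → W ≤ K ∙ z) ↔ Module.finrank K Z = 1 := by
  constructor
  · intro h
    obtain ⟨v, hvW, hv0⟩ := Submodule.exists_mem_ne_zero_of_ne_bot hW
    suffices Z = K ∙ v by rw [this, finrank_span_singleton hv0]
    refine le_antisymm (fun z hz => ?_) ((span_singleton_le_iff_mem v Z).mpr (hWZ hvW))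
    rcases eq_or_ne z 0 with rfl | hz0
    · exact zero_mem _
    · rw [← eq_span_singleton_of_mem_of_finrank_eq_one (finrank_span_singleton hz0)
        (h z hz hz0 hvW) hv0]
      exact mem_span_singleton_self z
  · intro h z hz hz0
    rw [← eq_span_singleton_of_mem_of_finrank_eq_one h hz hz0]
    exact hWZ

namespace LieAlgebra

variable {R L : Type*} [CommRing R] [LieRing L] [LieAlgebra R L]

theorem exists_lieIdeal_toSubmodule_eq_of_le_center {p : Submodule R L}
    (hp : p ≤ (center R L).toSubmodule) : ∃ I : LieIdeal R L, I.toSubmodule = p :=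
  (p.exists_lieSubmodule_coe_eq_iff L).mpr fun x _ hm => by
    rw [(LieModule.mem_maxTrivSubmodule R L L _).mp (hp hm) x]
    exact zero_mem p

theorem exists_mem_center_ne_zero_of_ne_bot [LieRing.IsNilpotent L] {I : LieIdeal R L}
    (hI : I ≠ ⊥) : ∃ z ∈ I, z ∈ center R L ∧ z ≠ 0 := by
  have : Nontrivial I := (LieSubmodule.nontrivial_iff_ne_bot (N := I)).mpr hI
  have : LieModule.IsNilpotent L I := by
    have := (LieModule.isNilpotent_of_top_iff' (R := R) (L := L) (M := L)).mpr ‹_›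
    exact LieModule.isNilpotent_of_le R L L I ⊤ le_top
  have := LieModule.nontrivial_max_triv_of_isNilpotent R L I
  obtain ⟨⟨z, hz⟩, hz0⟩ := exists_ne (0 : LieModule.maxTrivSubmodule R L I)
  refine ⟨z, z.2, fun x => ?_, fun h => hz0 (Subtype.ext (Subtype.ext h))⟩
  simpa using congrArg Subtype.val ((LieModule.mem_maxTrivSubmodule R L I z).mp hz x)

theorem forall_le_lieIdeal_iff_forall_le_span_center [LieRing.IsNilpotent L]
    (W : Submodule R L) :
    (∀ I : LieIdeal R L, I ≠ ⊥ → W ≤ I.toSubmodule) ↔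
      ∀ z ∈ (center R L).toSubmodule, z ≠ 0 → W ≤ R ∙ z := by
  constructor
  · intro h z hz hz0
    obtain ⟨I, hI⟩ := exists_lieIdeal_toSubmodule_eq_of_le_center
      ((Submodule.span_singleton_le_iff_mem z _).mpr hz)
    have hzI : z ∈ I := by
      rw [← LieSubmodule.mem_toSubmodule, hI]
      exact Submodule.mem_span_singleton_self z
    exact hI ▸ h I (fun hbot => hz0 ((LieSubmodule.mem_bot z).mp (hbot ▸ hzI)))
  · intro h I hI
    obtain ⟨z, hzI, hz, hz0⟩ := exists_mem_center_ne_zero_of_ne_bot hI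
    exact (h z hz hz0).trans ((Submodule.span_singleton_le_iff_mem z _).mpr hzI)

end LieAlgebra

def layersFrom {R M : Type*} [Semiring R] [AddCommMonoid M] [Module R M]
    (V : ℕ → Submodule R M) (k : ℕ) : Submodule R M :=
  ⨆ j, V (j + k)

theorem le_layersFrom {R M : Type*} [Semiring R] [AddCommMonoid M] [Module R M]
    (V : ℕ → Submodule R M) (j k : ℕ) : V (j + k) ≤ layersFrom V k :=
  le_iSup (fun j => V (j + k)) j

namespace IsStratified

variable {L : Type} [LieRing L] [LieAlgebra ℝ L] {s : ℕ} {V : ℕ → Submodule ℝ L}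

theorem eq_zero_of_mem_of_lt (hst : IsStratified L s V) {j : ℕ} (hj : s < j) {x : L}
    (hx : x ∈ V j) : x = 0 := by
  rwa [hst.gt_bot j hj, Submodule.mem_bot] at hx

theorem eq_zero_of_mem_zero (hst : IsStratified L s V) {x : L} (hx : x ∈ V 0) : x = 0 := by
  rwa [hst.zero_bot, Submodule.mem_bot] at hx

theorem lie_mem_succ (hst : IsStratified L s V) {j : ℕ} {x y : L} (hx : x ∈ V 1)
    (hy : y ∈ V j) : ⁅x, y⁆ ∈ V (j + 1) := by
  have hxy : ⁅x, y⁆ ∈ lieSpan (V 1) (V j) := Submodule.subset_span ⟨x, hx, y, hy, rfl⟩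
  rcases Nat.eq_zero_or_pos j with rfl | hj
  · simp [hst.eq_zero_of_mem_zero hy]
  rcases lt_trichotomy j s with hjs | rfl | hjs
  · rwa [← hst.layer j hj hjs]
  · rw [hst.last, Submodule.mem_bot] at hxy
    simp [hxy]
  · simp [hst.eq_zero_of_mem_of_lt hjs hy]

theorem lie_mem_add (hst : IsStratified L s V) {i j : ℕ} {x y : L} (hx : x ∈ V i)
    (hy : y ∈ V j) : ⁅x, y⁆ ∈ V (i + j) := by
  induction i generalizing j x y with
  | zero => simp [hst.eq_zero_of_mem_zero hx]
  | succ i ih =>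
    rcases Nat.eq_zero_or_pos i with rfl | hi
    · rw [Nat.zero_add, Nat.add_comm]
      exact hst.lie_mem_succ hx hy
    rcases lt_or_ge i s with his | his
    · rw [← hst.layer i hi his] at hx
      induction hx using Submodule.span_induction with
      | mem z hz =>
        obtain ⟨a, ha, b, hb, rfl⟩ := hz
        rw [lie_lie, Nat.add_right_comm]
        refine sub_mem (hst.lie_mem_succ ha (ih hb hy)) ?_
        rw [Nat.add_assoc]
        exact ih hb (hst.lie_mem_succ ha hy)
      | zero => simp
      | add u v _ _ hu hv => simpa [add_lie] using add_mem hu hv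
      | smul c u _ hu => simpa [smul_lie] using Submodule.smul_mem _ c hu
    · simp [hst.eq_zero_of_mem_of_lt (Nat.lt_succ_of_le his) hx]

theorem layersFrom_one (hst : IsStratified L s V) : layersFrom V 1 = ⊤ := by
  rw [eq_top_iff, ← hst.iSup_eq_top, iSup_le_iff]
  rintro (_ | j)
  · simp [hst.zero_bot]
  · exact le_layersFrom V j 1

theorem layersFrom_eq_bot (hst : IsStratified L s V) {k : ℕ} (hk : s < k) :
    layersFrom V k = ⊥ :=
  iSup_eq_bot.mpr fun j => hst.gt_bot (j + k) (by omega)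

theorem lie_mem_layersFrom (hst : IsStratified L s V) {i k : ℕ} {x y : L}
    (hx : x ∈ layersFrom V i) (hy : y ∈ layersFrom V k) : ⁅x, y⁆ ∈ layersFrom V (i + k) := by
  refine Submodule.iSup_induction _ (motive := fun x => ⁅x, y⁆ ∈ layersFrom V (i + k)) hx
    (fun _ x hx => ?_) (by simp) (fun x x' hx hx' => by simpa [add_lie] using add_mem hx hx')
  refine Submodule.iSup_induction _ (motive := fun y => ⁅x, y⁆ ∈ layersFrom V (i + k)) hy
    (fun _ y hy => ?_) (by simp) (fun y y' hy hy' => by simpa [lie_add] using add_mem hy hy')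
  have := hst.lie_mem_add hx hy
  rw [Nat.add_add_add_comm] at this
  exact le_layersFrom V _ _ this

theorem lowerCentralSeries_le_layersFrom (hst : IsStratified L s V) (k : ℕ) :
    (LieModule.lowerCentralSeries ℝ L L k).toSubmodule ≤ layersFrom V (k + 1) := by
  induction k with
  | zero => simp [hst.layersFrom_one]
  | succ k ih =>
    rw [LieModule.lowerCentralSeries_succ, LieSubmodule.lieIdeal_oper_eq_linear_span',
      Submodule.span_le]
    rintro _ ⟨x, -, y, hy, rfl⟩
    rw [Nat.add_comm]
    exact hst.lie_mem_layersFrom (hst.layersFrom_one ▸ Submodule.mem_top) (ih hy)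

theorem isNilpotent (hst : IsStratified L s V) : LieRing.IsNilpotent L := by
  refine (LieModule.isNilpotent_iff ℝ L L).mpr ⟨s, ?_⟩
  rw [← LieSubmodule.toSubmodule_eq_bot, ← le_bot_iff,
    ← hst.layersFrom_eq_bot (Nat.lt_succ_self s)]
  exact hst.lowerCentralSeries_le_layersFrom s

theorem last_le_center (hst : IsStratified L s V) :
    V s ≤ (LieAlgebra.center ℝ L).toSubmodule := by
  intro z hz
  rw [LieSubmodule.mem_toSubmodule, LieModule.mem_maxTrivSubmodule]
  intro x
  have := hst.lie_mem_layersFrom (hst.layersFrom_one ▸ Submodule.mem_top : x ∈ layersFrom V 1)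
    (le_layersFrom V 0 s (by rwa [Nat.zero_add]))
  rwa [hst.layersFrom_eq_bot (by omega), Submodule.mem_bot] at this

end IsStratified

theorem stratified_last_layer_in_ideals_iff_center_one_dimensional_general
    (L : Type) [LieRing L] [LieAlgebra ℝ L]
    (s : ℕ) (V : ℕ → Submodule ℝ L) (hst : IsStratified L s V) :
    (∀ I : LieIdeal ℝ L, I ≠ ⊥ → V s ≤ I.toSubmodule) ↔
      Module.finrank ℝ ↥(LieAlgebra.center ℝ L) = 1 := by
  have := hst.isNilpotent
  exact (LieAlgebra.forall_le_lieIdeal_iff_forall_le_span_center (V s)).trans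
    (Submodule.forall_le_span_singleton_iff_finrank_eq_one hst.last_le_center hst.last_ne_bot)

/-- For a stratified Lie algebra `g` of nilpotency step `s`, the following are
equivalent: (b) `V s ⊆ i` for every nontrivial ideal `i` of `g`;
(c) `dim Z(g) = 1`, where `Z(g)` is the center of `g`. -/
theorem stratified_last_layer_in_ideals_iff_center_one_dimensional
    (L : Type) [LieRing L] [LieAlgebra ℝ L] [FiniteDimensional ℝ L]
    (s : ℕ) (V : ℕ → Submodule ℝ L) (hst : IsStratified L s V) :
    (∀ I : LieIdeal ℝ L, I ≠ ⊥ → V s ≤ I.toSubmodule) ↔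
      Module.finrank ℝ ↥(LieAlgebra.center ℝ L) = 1 :=
  stratified_last_layer_in_ideals_iff_center_one_dimensional_general L s V hst
end

section
/- The center of a stratified Lie algebra is homogeneous: Z(g) = (V_1 ∩ Z(g)) ⊕ ... ⊕ (V_s ∩ Z(g)). -/
/-- Brackets of `V 1` with `V k` land in `V (k+1)`. -/
lemma bracket_mem_succ {L : Type} [LieRing L] [LieAlgebra ℝ L]
    {s : ℕ} {V : ℕ → Submodule ℝ L} (hst : IsStratified L s V)
    {x u : L} (hx : x ∈ V 1) {k : ℕ} (hu : u ∈ V k) :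
    ⁅x, u⁆ ∈ V (k + 1) := by
  rcases Nat.lt_or_ge k 1 with hk | hk
  · interval_cases k
    rw [hst.zero_bot, Submodule.mem_bot] at hu
    subst hu; simp
  · rcases lt_trichotomy k s with h | h | h
    · rw [← hst.layer k hk h]
      exact Submodule.subset_span ⟨x, hx, u, hu, rfl⟩
    · subst h
      have hb : ⁅x, u⁆ ∈ lieSpan (V k) (V k) ⊔ lieSpan (V 1) (V k) :=
        le_sup_right (α := Submodule ℝ L)
          (Submodule.subset_span ⟨x, hx, u, hu, rfl⟩)
      have h0 : ⁅x, u⁆ ∈ lieSpan (V 1) (V k) :=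
        Submodule.subset_span ⟨x, hx, u, hu, rfl⟩
      rw [hst.last, Submodule.mem_bot] at h0
      rw [h0]
      exact zero_mem _
    · rw [hst.gt_bot k h, Submodule.mem_bot] at hu
      subst hu; simp

/-- An element commuting with `V 1` is central. -/
lemma central_of_comm_V1 {L : Type} [LieRing L] [LieAlgebra ℝ L]
    {s : ℕ} {V : ℕ → Submodule ℝ L} (hst : IsStratified L s V)
    {w : L} (hw : ∀ x ∈ V 1, ⁅x, w⁆ = 0) : ∀ y : L, ⁅y, w⁆ = 0 := by
  let K : Submodule ℝ L :=
    { carrier := {y | ⁅y, w⁆ = 0}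
      add_mem' := fun {a b} ha hb => by
        simp only [Set.mem_setOf_eq] at *
        rw [add_lie, ha, hb, add_zero]
      zero_mem' := by simp
      smul_mem' := fun c a ha => by
        simp only [Set.mem_setOf_eq] at *
        rw [smul_lie, ha, smul_zero] }
  have hVK : ∀ j, V j ≤ K := by
    intro j
    induction j with
    | zero => rw [hst.zero_bot]; exact bot_le
    | succ j ih =>
      rcases Nat.eq_zero_or_pos j with rfl | hj
      · exact hw
      rcases Nat.lt_or_ge j s with hjs | hjs
      · rw [← hst.layer j hj hjs]
        apply Submodule.span_le.mpr
        rintro _ ⟨x, hx, u, hu, rfl⟩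
        have h1 : ⁅x, w⁆ = 0 := hw x hx
        have h2 : ⁅u, w⁆ = 0 := ih hu
        show ⁅⁅x, u⁆, w⁆ = 0
        rw [lie_lie, h1, h2, lie_zero, lie_zero, sub_zero]
      · rw [hst.gt_bot (j + 1) (Nat.lt_succ_of_le hjs)]
        exact bot_le
  intro y
  have hy : y ∈ K := by
    have : (⊤ : Submodule ℝ L) ≤ K := by
      rw [← hst.iSup_eq_top]; exact iSup_le hVK
    exact this Submodule.mem_top
  exact hy

/-- The center of a stratified Lie algebra is homogeneous:
`Z(g) = (V 1 ⊓ Z(g)) ⊕ ⋯ ⊕ (V s ⊓ Z(g))` (the sum is automatically direct, since the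
layers are independent). -/
theorem stratified_center_is_homogeneous
    (L : Type) [LieRing L] [LieAlgebra ℝ L]
    (s : ℕ) (V : ℕ → Submodule ℝ L) (hst : IsStratified L s V) :
    (LieAlgebra.center ℝ L).toSubmodule =
      ⨆ j, (V j ⊓ (LieAlgebra.center ℝ L).toSubmodule) := by
  classical
  refine le_antisymm ?_ (iSup_le fun j => inf_le_right)
  intro z hz
  have hzc : ∀ x : L, ⁅x, z⁆ = 0 := (LieModule.mem_maxTrivSubmodule ℝ L L z).mp hz
  -- decompose z
  have hz' : z ∈ ⨆ j, V j := hst.iSup_eq_top ▸ Submodule.mem_top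
  obtain ⟨f, hf, hfs⟩ := (Submodule.mem_iSup_iff_exists_finsupp V z).mp hz'
  -- each component commutes with V 1
  have key : ∀ j, ∀ x ∈ V 1, ⁅x, f j⁆ = 0 := by
    intro j x hx
    by_cases hj : f j = 0
    · rw [hj, lie_zero]
    have hjT : j ∈ f.support := Finsupp.mem_support_iff.mpr hj
    have hs2 : ∑ k ∈ f.support, f k = z := by rw [← hfs]; rfl
    have hsum : ∑ k ∈ f.support, ⁅x, f k⁆ = 0 := by
      have h := map_sum (LieModule.toEnd ℝ L L x) (fun k => f k) f.support
      simp only [LieModule.toEnd_apply_apply] at h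
      rw [← h, hs2, hzc]
    have hmem1 : ⁅x, f j⁆ ∈ V (j + 1) := bracket_mem_succ hst hx (hf j)
    have hmem2 : ⁅x, f j⁆ ∈ ⨆ k, ⨆ _ : k ≠ j + 1, V k := by
      have : ⁅x, f j⁆ = -∑ k ∈ f.support.erase j, ⁅x, f k⁆ := by
        have h2 := Finset.add_sum_erase _ (fun k => ⁅x, f k⁆) hjT
        rw [hsum] at h2
        exact eq_neg_of_add_eq_zero_left h2
      rw [this]
      refine neg_mem (Submodule.sum_mem _ fun k hk => ?_)
      have hkj : k ≠ j := Finset.ne_of_mem_erase hk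
      have : ⁅x, f k⁆ ∈ V (k + 1) := bracket_mem_succ hst hx (hf k)
      exact Submodule.mem_iSup_of_mem (k + 1)
        (Submodule.mem_iSup_of_mem (fun h => hkj (Nat.succ_injective h)) this)
    have := (hst.indep (j + 1)).le_bot ⟨hmem1, hmem2⟩
    simpa using this
  -- each component is central
  have hcent : ∀ j, f j ∈ (LieAlgebra.center ℝ L).toSubmodule := by
    intro j
    exact (LieModule.mem_maxTrivSubmodule ℝ L L (f j)).mpr
      (central_of_comm_V1 hst (key j))
  rw [← hfs]
  refine Submodule.sum_mem _ fun j _ => ?_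
  exact Submodule.mem_iSup_of_mem j (Submodule.mem_inf.mpr ⟨hf j, hcent j⟩)
end

section
/- Let g be a stratified Lie algebra, W a horizontal half-space of g, and h a subalgebra of g containing ∂W. Then the following are equivalent: (1) there exists X ∈ V_1 \ ∂W such that ad_X^k(Y) ∈ h for all Y ∈ ∂W and all k ≥ 1; (2) [g,g] ⊆ h. -/
theorem Submodule.le_span_singleton_sup_of_inf_ker_le {K V : Type*} [Field K] [AddCommGroup V]
    [Module K V] {P S : Submodule K V} {f : V →ₗ[K] K} {x : V} (hxP : x ∈ P) (hfx : f x ≠ 0)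
    (hS : P ⊓ LinearMap.ker f ≤ S) : P ≤ K ∙ x ⊔ S := by
  intro v hv
  have hv' : v ∈ K ∙ x ⊔ LinearMap.ker f := by
    simp [LinearMap.span_singleton_sup_ker_eq_top f hfx]
  obtain ⟨u, hu, w, hw, rfl⟩ := Submodule.mem_sup.mp hv'
  obtain ⟨c, rfl⟩ := Submodule.mem_span_singleton.mp hu
  have hwP : w ∈ P := by simpa using P.sub_mem hv (P.smul_mem c hxP)
  exact Submodule.add_mem_sup hu (hS ⟨hwP, hw⟩)

namespace LieSubalgebra

variable {R L : Type*} [CommRing R] [LieRing L] [LieAlgebra R L] {H : LieSubalgebra R L}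

theorem lie_mem_of_mem_span_singleton_sup {x y z : L} (hx : x ∈ H.normalizer)
    (hy : y ∈ R ∙ x ⊔ H.toSubmodule) (hz : z ∈ R ∙ x ⊔ H.toSubmodule) : ⁅y, z⁆ ∈ H := by
  obtain ⟨_, hu, v, hv, rfl⟩ := Submodule.mem_sup.mp hy
  obtain ⟨_, hu', w, hw, rfl⟩ := Submodule.mem_sup.mp hz
  obtain ⟨t, rfl⟩ := Submodule.mem_span_singleton.mp hu
  obtain ⟨s, rfl⟩ := Submodule.mem_span_singleton.mp hu'
  simp only [add_lie, lie_add, smul_lie, lie_smul, lie_self, smul_zero, zero_add]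
  exact H.add_mem (H.smul_mem s ((H.mem_normalizer_iff' x).mp hx v hv))
    (H.add_mem (H.smul_mem t ((H.mem_normalizer_iff x).mp hx w hw)) (H.lie_mem hv hw))

def supSpanSingleton (H : LieSubalgebra R L) {x : L} (hx : x ∈ H.normalizer) :
    LieSubalgebra R L where
  toSubmodule := R ∙ x ⊔ H.toSubmodule
  lie_mem' hy hz := Submodule.mem_sup_right (lie_mem_of_mem_span_singleton_sup hx hy hz)

theorem ad_pow_lie_mem {x y z : L} (hy : ∀ k : ℕ, (LieAlgebra.ad R L x ^ k) y ∈ H)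
    (hz : ∀ k : ℕ, (LieAlgebra.ad R L x ^ k) z ∈ H) (k : ℕ) :
    (LieAlgebra.ad R L x ^ k) ⁅y, z⁆ ∈ H := by
  induction k generalizing y z with
  | zero => simpa using H.lie_mem (by simpa using hy 0) (by simpa using hz 0)
  | succ k ih =>
    rw [pow_succ, Module.End.mul_apply, LieAlgebra.ad_apply, leibniz_lie, map_add]
    exact H.add_mem (ih (fun j => by simpa [pow_succ] using hy (j + 1)) hz)
      (ih hy fun j => by simpa [pow_succ] using hz (j + 1))

/-- The largest `ad x`-invariant subspace of `H`. -/
def adPowCore (H : LieSubalgebra R L) (x : L) : LieSubalgebra R L where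
  toSubmodule := ⨅ k : ℕ, H.toSubmodule.comap (LieAlgebra.ad R L x ^ k)
  lie_mem' hy hz :=
    Submodule.mem_iInf _ |>.mpr <|
      ad_pow_lie_mem (Submodule.mem_iInf _ |>.mp hy) (Submodule.mem_iInf _ |>.mp hz)

theorem mem_adPowCore {x y : L} :
    y ∈ H.adPowCore x ↔ ∀ k : ℕ, (LieAlgebra.ad R L x ^ k) y ∈ H := by
  change y ∈ (⨅ k : ℕ, H.toSubmodule.comap (LieAlgebra.ad R L x ^ k)) ↔ _
  simp only [Submodule.mem_iInf, Submodule.mem_comap, LieSubalgebra.mem_toSubmodule]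

variable (H) in
theorem adPowCore_le (x : L) : H.adPowCore x ≤ H :=
  fun _ hy => by simpa using mem_adPowCore.mp hy 0

variable (H) in
theorem mem_normalizer_adPowCore (x : L) : x ∈ (H.adPowCore x).normalizer := by
  refine ((H.adPowCore x).mem_normalizer_iff x).mpr fun y hy => mem_adPowCore.mpr fun k => ?_
  simpa [pow_succ] using mem_adPowCore.mp hy (k + 1)

theorem forall_mem_lie_top_top_iff {S : Submodule R L} :
    (∀ z ∈ ⁅(⊤ : LieIdeal R L), (⊤ : LieIdeal R L)⁆, z ∈ S) ↔ ∀ y z : L, ⁅y, z⁆ ∈ S := by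
  refine ⟨fun hS y z => hS _ (LieSubmodule.lie_mem_lie (mem_top y) (mem_top z)), fun hS z hz => ?_⟩
  replace hz := (LieSubmodule.mem_toSubmodule _).mpr hz
  rw [LieSubmodule.lieIdeal_oper_eq_linear_span'] at hz
  exact Submodule.span_le.mpr (by rintro _ ⟨y, -, z, -, rfl⟩; exact hS y z) hz

end LieSubalgebra

theorem IsStratified.eq_top_of_le {L : Type} [LieRing L] [LieAlgebra ℝ L] {s : ℕ}
    {V : ℕ → Submodule ℝ L} (hst : IsStratified L s V) {K : LieSubalgebra ℝ L}
    (hK : V 1 ≤ K.toSubmodule) : K = ⊤ := by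
  have hVK : ∀ j, V j ≤ K.toSubmodule := by
    intro j
    induction j with
    | zero => simp [hst.zero_bot]
    | succ n ih =>
      rcases Nat.eq_zero_or_pos n with rfl | hn
      · exact hK
      rcases lt_or_ge n s with hns | hns
      · rw [← hst.layer n hn hns, lieSpan, Submodule.span_le]
        rintro _ ⟨x, hx, y, hy, rfl⟩
        exact K.lie_mem (hK hx) (ih hy)
      · simp [hst.gt_bot (n + 1) (by omega)]
  rw [← LieSubalgebra.toSubmodule_inj, LieSubalgebra.top_toSubmodule, eq_top_iff,
    ← hst.iSup_eq_top]
  exact iSup_le hVK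

/-- Let `g` be a stratified Lie algebra, `W = {v ∈ V₁ : lam v ≥ 0}` a horizontal
half-space (given by a linear functional `lam` that is nonzero on `V₁`, with boundary
`∂W = {v ∈ V₁ : lam v = 0}`), and `h` a Lie subalgebra of `g` containing `∂W`. Then the
following are equivalent: (1) there exists `X ∈ V₁ \ ∂W` such that `ad_X^k Y ∈ h` for
all `Y ∈ ∂W` and all `k ≥ 1`; (2) `[g,g] ⊆ h`. -/
theorem halfspace_boundary_subalgebra_iff_contains_commutator
    (L : Type) [LieRing L] [LieAlgebra ℝ L]
    (s : ℕ) (V : ℕ → Submodule ℝ L) (hst : IsStratified L s V)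
    (lam : L →ₗ[ℝ] ℝ) (hlam : ∃ v ∈ V 1, lam v ≠ 0)
    (h : LieSubalgebra ℝ L)
    (hbd : ∀ v ∈ V 1, lam v = 0 → v ∈ h) :
    (∃ X ∈ V 1, lam X ≠ 0 ∧
        ∀ Y ∈ V 1, lam Y = 0 → ∀ k : ℕ, 1 ≤ k → ((LieAlgebra.ad ℝ L X) ^ k) Y ∈ h) ↔
      (∀ z ∈ ⁅(⊤ : LieIdeal ℝ L), (⊤ : LieIdeal ℝ L)⁆, z ∈ h) := by
  refine Iff.trans ?_ (LieSubalgebra.forall_mem_lie_top_top_iff (S := h.toSubmodule)).symm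
  constructor
  · rintro ⟨X, hXV, hXlam, hX⟩ y z
    have hbdK : V 1 ⊓ LinearMap.ker lam ≤ (h.adPowCore X).toSubmodule := by
      rintro Y ⟨hYV, hY : lam Y = 0⟩
      refine LieSubalgebra.mem_adPowCore.mpr fun k => ?_
      rcases k with _ | k
      · simpa using hbd Y hYV hY
      · exact hX Y hYV hY (k + 1) k.succ_pos
    have hXnorm := h.mem_normalizer_adPowCore X
    have htop : (h.adPowCore X).supSpanSingleton hXnorm = ⊤ :=
      hst.eq_top_of_le (Submodule.le_span_singleton_sup_of_inf_ker_le hXV hXlam hbdK)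
    have hmem (w : L) : w ∈ ℝ ∙ X ⊔ (h.adPowCore X).toSubmodule := by
      change w ∈ (h.adPowCore X).supSpanSingleton hXnorm
      simp [htop]
    exact h.adPowCore_le X
      (LieSubalgebra.lie_mem_of_mem_span_singleton_sup hXnorm (hmem y) (hmem z))
  · intro hcomm
    obtain ⟨X, hXV, hXlam⟩ := hlam
    refine ⟨X, hXV, hXlam, fun Y _ _ k hk => ?_⟩
    obtain ⟨k, rfl⟩ := Nat.exists_eq_add_of_le' hk
    rw [pow_succ', Module.End.mul_apply, LieAlgebra.ad_apply]
    exact hcomm X _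
end

section
/- Let G be a Lie group whose exponential map is injective and let s ⊆ g be such that S = exp(s) is a closed semigroup. Then the tangent wedge w(s) := {X ∈ g : ℝ₊X ⊆ s} is a closed convex cone in g. -/
/-- The tangent wedge of a subset `s` of a Lie algebra: `w(s) = {X : ℝ₊ X ⊆ s}`. -/
def wedge {L : Type} [LieRing L] [LieAlgebra ℝ L] (s : Set L) : Set L :=
  {X : L | ∀ t : ℝ, 0 < t → t • X ∈ s}

/-- The edge of the wedge of a subset `s` of a Lie algebra: `e(s) = {X : ℝ X ⊆ s}`. -/
def edge {L : Type} [LieRing L] [LieAlgebra ℝ L] (s : Set L) : Set L :=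
  {X : L | ∀ t : ℝ, t • X ∈ s}

/-- `e^{ad_X} Y`: the exponential series of the adjoint endomorphism `ad_X`,
applied to `Y`. -/
noncomputable def expAd {L : Type} [LieRing L] [LieAlgebra ℝ L] [TopologicalSpace L]
    (X Y : L) : L :=
  ∑' k : ℕ, ((k.factorial : ℝ)⁻¹ • ((LieAlgebra.ad ℝ L X) ^ k) Y)

/-- Let `G` be a (topological) Lie group whose exponential map `exp : g → G` is
injective, and let `s ⊆ g` be such that `S = exp(s)` is a closed semigroup. Then the
tangent wedge `w(s) = {X : ℝ₊X ⊆ s}` is a closed convex cone in `g`. -/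
theorem wedge_of_closed_semigroup_is_closed_convex_cone
    (L : Type) [LieRing L] [LieAlgebra ℝ L] [FiniteDimensional ℝ L]
    [TopologicalSpace L] [IsTopologicalAddGroup L] [ContinuousSMul ℝ L]
    (G : Type) [Group G] [TopologicalSpace G] [IsTopologicalGroup G]
    (exp : L → G)
    (hcont : Continuous exp)
    (hinj : Function.Injective exp)
    (hline : ∀ (X : L) (t u : ℝ), exp ((t + u) • X) = exp (t • X) * exp (u • X))
    (hconj : ∀ X Y : L, exp X * exp Y * (exp X)⁻¹ = exp (expAd X Y))
    (htrot : ∀ X Y : L, Filter.Tendsto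
      (fun n : ℕ => (exp ((n : ℝ)⁻¹ • X) * exp ((n : ℝ)⁻¹ • Y)) ^ n)
      Filter.atTop (nhds (exp (X + Y))))
    (s : Set L)
    (hsem : ∀ x ∈ s, ∀ y ∈ s, ∃ z ∈ s, exp x * exp y = exp z)
    (hcl : IsClosed (exp '' s)) :
    IsClosed (wedge s) ∧ Convex ℝ (wedge s) ∧
      (∀ X ∈ wedge s, ∀ c : ℝ, 0 < c → c • X ∈ wedge s) := by

  have hmem : ∀ X : L, X ∈ s ↔ exp X ∈ exp '' s := by
    intro X
    constructor
    · exact fun h => ⟨X, h, rfl⟩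
    · rintro ⟨z, hz, hzz⟩
      rwa [hinj hzz] at hz
  have hmul : ∀ g ∈ exp '' s, ∀ h ∈ exp '' s, g * h ∈ exp '' s := by
    rintro g ⟨x, hx, rfl⟩ h ⟨y, hy, rfl⟩
    obtain ⟨z, hz, hzz⟩ := hsem x hx y hy
    exact ⟨z, hz, hzz.symm⟩
  have hpow : ∀ g ∈ exp '' s, ∀ n : ℕ, 1 ≤ n → g ^ n ∈ exp '' s := by
    intro g hg n hn
    induction n with
    | zero => omega
    | succ m ih =>
      rcases Nat.eq_zero_or_pos m with rfl | hm
      · simpa using hg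
      · rw [pow_succ]
        exact hmul _ (ih hm) _ hg
  have hcone : ∀ X ∈ wedge s, ∀ c : ℝ, 0 < c → c • X ∈ wedge s := by
    intro X hX c hc t ht
    rw [smul_smul]
    exact hX _ (mul_pos ht hc)
  have hadd : ∀ X ∈ wedge s, ∀ Y ∈ wedge s, X + Y ∈ wedge s := by
    intro X hX Y hY t ht
    rw [smul_add, hmem]
    refine hcl.mem_of_tendsto (htrot (t • X) (t • Y)) ?_
    filter_upwards [Filter.eventually_ge_atTop 1] with n hn
    have hn' : (0 : ℝ) < (n : ℝ)⁻¹ := by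
      have : (0 : ℝ) < (n : ℝ) := by exact_mod_cast hn
      exact inv_pos.mpr this
    have h1 : exp ((n : ℝ)⁻¹ • (t • X)) ∈ exp '' s := by
      rw [smul_smul]
      exact ⟨_, hX _ (mul_pos hn' ht), rfl⟩
    have h2 : exp ((n : ℝ)⁻¹ • (t • Y)) ∈ exp '' s := by
      rw [smul_smul]
      exact ⟨_, hY _ (mul_pos hn' ht), rfl⟩
    exact hpow _ (hmul _ h1 _ h2) n hn
  refine ⟨?_, ?_, hcone⟩
  · have heq : wedge s = ⋂ (t : {t : ℝ // 0 < t}), (fun X => exp ((t : ℝ) • X)) ⁻¹' (exp '' s) := by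
      ext X
      simp only [wedge, Set.mem_setOf_eq, Set.mem_iInter, Set.mem_preimage]
      constructor
      · rintro h ⟨t, ht⟩
        exact (hmem _).mp (h t ht)
      · intro h t ht
        exact (hmem _).mpr (h ⟨t, ht⟩)
    rw [heq]
    exact isClosed_iInter fun t => hcl.preimage (hcont.comp (continuous_const_smul (t : ℝ)))
  · intro X hX Y hY a b ha hb hab
    rcases ha.eq_or_lt with rfl | ha'
    · have hb1 : b = 1 := by linarith
      simpa [hb1] using hY
    rcases hb.eq_or_lt with rfl | hb'
    · have ha1 : a = 1 := by linarith
      simpa [ha1] using hX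
    exact hadd _ (hcone X hX a ha') _ (hcone Y hY b hb')
end

section
/- Carnot quotients of semigenerated Carnot algebras are semigenerated: if g is a semigenerated stratified Lie algebra and i is a homogeneous ideal of g, then g/i is semigenerated. -/
/-- The semigroup generated by a subset `W` inside the group with product `mul` (in
exponential coordinates): all nonempty finite products of elements of `W`. -/
def genSemigroup {L : Type} [Zero L] (mul : L → L → L) (W : Set L) : Set L :=
  {x : L | ∃ l : List L, l ≠ [] ∧ (∀ w ∈ l, w ∈ W) ∧ l.foldr mul 0 = x}

/-- `mul` is the product of the Carnot group of the stratified Lie algebra `L`, read in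
exponential coordinates: it is a group product with identity `0` and inverse `-·`,
lines are one-parameter subgroups, conjugation is given by `e^{ad}` and the Lie
product formula (Trotter) holds. -/
structure IsExpGroup (L : Type) [LieRing L] [LieAlgebra ℝ L] [TopologicalSpace L]
    (mul : L → L → L) : Prop where
  assoc : ∀ a b c : L, mul (mul a b) c = mul a (mul b c)
  zero_mul : ∀ a : L, mul 0 a = a
  mul_zero : ∀ a : L, mul a 0 = a
  mul_neg : ∀ a : L, mul a (-a) = 0
  line : ∀ (X : L) (t u : ℝ), mul (t • X) (u • X) = (t + u) • X
  conj : ∀ X Y : L, mul (mul X Y) (-X) = expAd X Y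
  trotter : ∀ X Y : L, Filter.Tendsto
    (fun n : ℕ => (fun z => mul (mul ((n : ℝ)⁻¹ • X) ((n : ℝ)⁻¹ • Y)) z)^[n] (0 : L))
    Filter.atTop (nhds (X + Y))

/-- A stratified Lie algebra `L`, whose Carnot group is `(L, mul)` in exponential
coordinates, is semigenerated if for every horizontal half-space
`W = {v ∈ V 1 : lam v ≥ 0}` (with `lam` a linear functional not vanishing on the first
layer `V 1`) the commutator subalgebra `[L,L]` is contained in the closure of the
semigroup generated by `W`. -/
def Semigenerated (L : Type) [LieRing L] [LieAlgebra ℝ L] [TopologicalSpace L]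
    (V : ℕ → Submodule ℝ L) (mul : L → L → L) : Prop :=
  ∀ lam : L →ₗ[ℝ] ℝ, (∃ v ∈ V 1, lam v ≠ 0) →
    ∀ z ∈ ⁅(⊤ : LieIdeal ℝ L), (⊤ : LieIdeal ℝ L)⁆,
      z ∈ closure (genSemigroup mul {v : L | v ∈ V 1 ∧ 0 ≤ lam v})

/-- Carnot quotients of semigenerated Carnot algebras are semigenerated: if `L` is a
semigenerated stratified Lie algebra and `L'` is the quotient of `L` by a homogeneous
ideal — presented here by a surjective Lie algebra homomorphism `π : L → L'` mapping
each layer `V j` onto the layer `V' j`, which is also a homomorphism of the associated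
Carnot groups — then `L'` is semigenerated. -/
theorem Carnot_quotient_of_semigenerated_is_semigenerated
    (L : Type) [LieRing L] [LieAlgebra ℝ L] [FiniteDimensional ℝ L]
    [TopologicalSpace L] [IsTopologicalAddGroup L] [ContinuousSMul ℝ L]
    (L' : Type) [LieRing L'] [LieAlgebra ℝ L'] [FiniteDimensional ℝ L']
    [TopologicalSpace L'] [IsTopologicalAddGroup L'] [ContinuousSMul ℝ L']
    (s s' : ℕ) (V : ℕ → Submodule ℝ L) (V' : ℕ → Submodule ℝ L')
    (hV : IsStratified L s V) (hV' : IsStratified L' s' V')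
    (mul : L → L → L) (mul' : L' → L' → L')
    (hmul : IsExpGroup L mul) (hmul' : IsExpGroup L' mul')
    (π : L →ₗ⁅ℝ⁆ L')
    (hsurj : Function.Surjective π)
    (hcont : Continuous π) (hopen : IsOpenMap π)
    (hgraded : ∀ j, Submodule.map π.toLinearMap (V j) = V' j)
    (hhom : ∀ x y : L, π (mul x y) = mul' (π x) (π y))
    (hsg : Semigenerated L V mul) :
    Semigenerated L' V' mul' := by
  intro lam' ⟨v', hv'1, hv'ne⟩ z hz
  -- pull back the functional
  set lam : L →ₗ[ℝ] ℝ := lam'.comp π.toLinearMap with hlam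
  have hvex : ∃ v ∈ V 1, lam v ≠ 0 := by
    rw [← hgraded 1] at hv'1
    obtain ⟨v, hv, rfl⟩ := hv'1
    exact ⟨v, hv, hv'ne⟩
  -- lift z to the commutator ideal of L
  have hz' : z ∈ Submodule.span ℝ
      {m : L' | ∃ x ∈ (⊤ : LieIdeal ℝ L'), ∃ n ∈ (⊤ : LieIdeal ℝ L'), ⁅x, n⁆ = m} := by
    rw [← LieSubmodule.lieIdeal_oper_eq_linear_span', LieSubmodule.mem_toSubmodule]
    exact hz
  have hSS : {m : L' | ∃ x ∈ (⊤ : LieIdeal ℝ L'), ∃ n ∈ (⊤ : LieIdeal ℝ L'), ⁅x, n⁆ = m}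
      = π.toLinearMap '' {m : L | ∃ x ∈ (⊤ : LieIdeal ℝ L), ∃ n ∈ (⊤ : LieIdeal ℝ L), ⁅x, n⁆ = m} := by
    ext m
    constructor
    · rintro ⟨x', -, y', -, rfl⟩
      obtain ⟨x, rfl⟩ := hsurj x'
      obtain ⟨y, rfl⟩ := hsurj y'
      exact ⟨⁅x, y⁆, ⟨x, trivial, y, trivial, rfl⟩, π.map_lie x y⟩
    · rintro ⟨m, ⟨x, -, y, -, rfl⟩, rfl⟩
      exact ⟨π x, trivial, π y, trivial, (π.map_lie x y).symm⟩
  rw [hSS, Submodule.span_image] at hz'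
  obtain ⟨z₀, hz₀s, rfl⟩ := hz'
  have hz₀ : z₀ ∈ ⁅(⊤ : LieIdeal ℝ L), (⊤ : LieIdeal ℝ L)⁆ := by
    rw [← LieSubmodule.mem_toSubmodule, LieSubmodule.lieIdeal_oper_eq_linear_span']
    exact hz₀s
  -- apply semigeneration in L
  have hz₀c := hsg lam hvex z₀ hz₀
  -- the image of the semigroup lands in the semigroup of L'
  have himg : π '' genSemigroup mul {v : L | v ∈ V 1 ∧ 0 ≤ lam v}
      ⊆ genSemigroup mul' {v : L' | v ∈ V' 1 ∧ 0 ≤ lam' v} := by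
    rintro _ ⟨x, ⟨l, hlne, hlW, rfl⟩, rfl⟩
    refine ⟨l.map π, by simpa using hlne, ?_, ?_⟩
    · intro w' hw'
      obtain ⟨w, hw, rfl⟩ := List.mem_map.1 hw'
      obtain ⟨hw1, hw2⟩ := hlW w hw
      exact ⟨(hgraded 1) ▸ Submodule.mem_map_of_mem hw1, hw2⟩
    · clear hlne hlW
      induction l with
      | nil => simp
      | cons a t ih => simp [hhom, ih]
  exact closure_mono himg
    (image_closure_subset_closure_image hcont (Set.mem_image_of_mem _ hz₀c))
end

section
/- The direct product of two semigenerated stratified Lie algebras is semigenerated. -/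
/-- The componentwise Lie ring structure on a product of Lie rings. -/
instance prodLieRing (L₁ L₂ : Type) [LieRing L₁] [LieRing L₂] : LieRing (L₁ × L₂) :=
  { (inferInstance : AddCommGroup (L₁ × L₂)) with
    bracket := fun x y => (⁅x.1, y.1⁆, ⁅x.2, y.2⁆)
    add_lie := by intro x y z; refine Prod.ext ?_ ?_ <;> simp [add_lie]
    lie_add := by intro x y z; refine Prod.ext ?_ ?_ <;> simp [lie_add]
    lie_self := by intro x; refine Prod.ext ?_ ?_ <;> simp
    leibniz_lie := by
      intro x y z
      refine Prod.ext ?_ ?_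
      · exact leibniz_lie x.1 y.1 z.1
      · exact leibniz_lie x.2 y.2 z.2 }

/-- The componentwise Lie algebra structure on a product of Lie algebras. -/
instance prodLieAlgebra (L₁ L₂ : Type) [LieRing L₁] [LieRing L₂]
    [LieAlgebra ℝ L₁] [LieAlgebra ℝ L₂] : LieAlgebra ℝ (L₁ × L₂) :=
  { (inferInstance : Module ℝ (L₁ × L₂)) with
    lie_smul := by
      intro c x y
      refine Prod.ext ?_ ?_ <;> simp [Bracket.bracket, lie_smul] }


/-- If the first layer of a stratification were trivial, every layer would be, contradicting
`last_ne_bot`. Auxiliary: `lieSpan` with trivial left factor is trivial. -/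
lemma lieSpan_bot_left {L : Type} [LieRing L] [LieAlgebra ℝ L] (B : Submodule ℝ L) :
    lieSpan ⊥ B = ⊥ := by
  rw [lieSpan, Submodule.span_eq_bot]
  rintro z ⟨x, hx, y, hy, rfl⟩
  rw [Submodule.mem_bot] at hx
  simp [hx]

/-- The first layer of a stratified Lie algebra is nontrivial. -/
lemma IsStratified.V1_ne_bot {L : Type} [LieRing L] [LieAlgebra ℝ L]
    {s : ℕ} {V : ℕ → Submodule ℝ L} (h : IsStratified L s V) : V 1 ≠ ⊥ := by
  intro h1
  apply h.last_ne_bot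
  have key : ∀ j, V j = ⊥ := by
    intro j
    match j with
    | 0 => exact h.zero_bot
    | 1 => exact h1
    | (n+2) =>
      rcases lt_or_ge s (n+2) with hs | hs
      · exact h.gt_bot _ hs
      · rw [← h.layer (n+1) (by omega) (by omega), h1, lieSpan_bot_left]
  exact key s

/-- Given any functional `lam`, there is a functional `f` not vanishing on the first layer,
whose nonnegativity locus on the first layer is contained in that of `lam`: take `lam`
itself if it does not vanish on `V 1`, and any functional separating a nonzero vector of
`V 1` otherwise. -/
lemma choose_functional {L : Type} [LieRing L] [LieAlgebra ℝ L] [FiniteDimensional ℝ L]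
    {s : ℕ} {V : ℕ → Submodule ℝ L} (h : IsStratified L s V) (lam : L →ₗ[ℝ] ℝ) :
    ∃ f : L →ₗ[ℝ] ℝ, (∃ v ∈ V 1, f v ≠ 0) ∧ ∀ y ∈ V 1, 0 ≤ f y → 0 ≤ lam y := by
  by_cases hc : ∃ v ∈ V 1, lam v ≠ 0
  · exact ⟨lam, hc, fun y _ hy => hy⟩
  · push_neg at hc
    obtain ⟨v, hv, hv0⟩ := Submodule.exists_mem_ne_zero_of_ne_bot h.V1_ne_bot
    have : ¬ ∀ φ : Module.Dual ℝ L, φ v = 0 := by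
      rw [Module.forall_dual_apply_eq_zero_iff]; exact hv0
    push_neg at this
    obtain ⟨φ, hφ⟩ := this
    exact ⟨φ, ⟨v, hv, hφ⟩, fun y hy _ => le_of_eq (hc y hy).symm⟩

/-- The first projection as a Lie algebra homomorphism. -/
def lieFst (L₁ L₂ : Type) [LieRing L₁] [LieRing L₂] [LieAlgebra ℝ L₁] [LieAlgebra ℝ L₂] :
    (L₁ × L₂) →ₗ⁅ℝ⁆ L₁ :=
  { LinearMap.fst ℝ L₁ L₂ with map_lie' := fun {_ _} => rfl }

/-- The second projection as a Lie algebra homomorphism. -/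
def lieSnd (L₁ L₂ : Type) [LieRing L₁] [LieRing L₂] [LieAlgebra ℝ L₁] [LieAlgebra ℝ L₂] :
    (L₁ × L₂) →ₗ⁅ℝ⁆ L₂ :=
  { LinearMap.snd ℝ L₁ L₂ with map_lie' := fun {_ _} => rfl }

/-- Lie algebra homomorphisms map the commutator ideal into the commutator ideal. -/
lemma mem_comm_of_lieHom {L L' : Type} [LieRing L] [LieAlgebra ℝ L] [LieRing L']
    [LieAlgebra ℝ L'] (f : L →ₗ⁅ℝ⁆ L') {z : L}
    (hz : z ∈ ⁅(⊤ : LieIdeal ℝ L), (⊤ : LieIdeal ℝ L)⁆) :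
    f z ∈ ⁅(⊤ : LieIdeal ℝ L'), (⊤ : LieIdeal ℝ L')⁆ := by
  have h1 : f z ∈ LieIdeal.map f ⁅(⊤ : LieIdeal ℝ L), ⊤⁆ := LieIdeal.mem_map hz
  exact LieSubmodule.mono_lie le_top le_top (LieIdeal.map_bracket_le f h1)

/-- Folding the product multiplication over a list lifted in the first component. -/
lemma foldr_map_inl {L₁ L₂ : Type} [Zero L₂] (mul₁ : L₁ → L₁ → L₁) (mul₂ : L₂ → L₂ → L₂)
    (h0 : ∀ a, mul₂ 0 a = a) (l : List L₁) (c : L₁ × L₂) :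
    (l.map (fun x => ((x, 0) : L₁ × L₂))).foldr
      (fun x y => (mul₁ x.1 y.1, mul₂ x.2 y.2)) c = (l.foldr mul₁ c.1, c.2) := by
  induction l with
  | nil => rfl
  | cons a l ih => simp [ih, h0]

/-- Folding the product multiplication over a list lifted in the second component. -/
lemma foldr_map_inr {L₁ L₂ : Type} [Zero L₁] (mul₁ : L₁ → L₁ → L₁) (mul₂ : L₂ → L₂ → L₂)
    (h0 : ∀ a, mul₁ 0 a = a) (l : List L₂) (c : L₁ × L₂) :
    (l.map (fun y => ((0, y) : L₁ × L₂))).foldr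
      (fun x y => (mul₁ x.1 y.1, mul₂ x.2 y.2)) c = (c.1, l.foldr mul₂ c.2) := by
  induction l with
  | nil => rfl
  | cons a l ih => simp [ih, h0]

/-- The direct product of two semigenerated stratified Lie algebras is semigenerated.
The product carries the componentwise bracket, layers `V₁ j × V₂ j` and the
componentwise Carnot group product. -/
theorem product_of_semigenerated_is_semigenerated
    (L₁ : Type) [LieRing L₁] [LieAlgebra ℝ L₁] [FiniteDimensional ℝ L₁]
    [TopologicalSpace L₁] [IsTopologicalAddGroup L₁] [ContinuousSMul ℝ L₁]
    (L₂ : Type) [LieRing L₂] [LieAlgebra ℝ L₂] [FiniteDimensional ℝ L₂]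
    [TopologicalSpace L₂] [IsTopologicalAddGroup L₂] [ContinuousSMul ℝ L₂]
    (s₁ s₂ : ℕ) (V₁ : ℕ → Submodule ℝ L₁) (V₂ : ℕ → Submodule ℝ L₂)
    (h₁ : IsStratified L₁ s₁ V₁) (h₂ : IsStratified L₂ s₂ V₂)
    (mul₁ : L₁ → L₁ → L₁) (mul₂ : L₂ → L₂ → L₂)
    (hm₁ : IsExpGroup L₁ mul₁) (hm₂ : IsExpGroup L₂ mul₂)
    (hsg₁ : Semigenerated L₁ V₁ mul₁) (hsg₂ : Semigenerated L₂ V₂ mul₂) :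
    Semigenerated (L₁ × L₂) (fun j => (V₁ j).prod (V₂ j))
      (fun x y => (mul₁ x.1 y.1, mul₂ x.2 y.2)) := by
  intro lam _hlam z hz
  set lam₁ : L₁ →ₗ[ℝ] ℝ := lam.comp (LinearMap.inl ℝ L₁ L₂) with hlam₁
  set lam₂ : L₂ →ₗ[ℝ] ℝ := lam.comp (LinearMap.inr ℝ L₁ L₂) with hlam₂
  obtain ⟨f₁, hf₁ex, hf₁pos⟩ := choose_functional h₁ lam₁
  obtain ⟨f₂, hf₂ex, hf₂pos⟩ := choose_functional h₂ lam₂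
  have hz₁ : z.1 ∈ closure (genSemigroup mul₁ {v : L₁ | v ∈ V₁ 1 ∧ 0 ≤ f₁ v}) :=
    hsg₁ f₁ hf₁ex z.1 (mem_comm_of_lieHom (lieFst L₁ L₂) hz)
  have hz₂ : z.2 ∈ closure (genSemigroup mul₂ {v : L₂ | v ∈ V₂ 1 ∧ 0 ≤ f₂ v}) :=
    hsg₂ f₂ hf₂ex z.2 (mem_comm_of_lieHom (lieSnd L₁ L₂) hz)
  set mul : L₁ × L₂ → L₁ × L₂ → L₁ × L₂ :=
    fun x y => (mul₁ x.1 y.1, mul₂ x.2 y.2) with hmul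
  set W : Set (L₁ × L₂) := {v : L₁ × L₂ | v ∈ (V₁ 1).prod (V₂ 1) ∧ 0 ≤ lam v} with hW
  have hsub : (genSemigroup mul₁ {v : L₁ | v ∈ V₁ 1 ∧ 0 ≤ f₁ v}) ×ˢ
      (genSemigroup mul₂ {v : L₂ | v ∈ V₂ 1 ∧ 0 ≤ f₂ v}) ⊆ genSemigroup mul W := by
    rintro ⟨a, b⟩ ⟨⟨l₁, hl₁ne, hl₁mem, hl₁⟩, ⟨l₂, hl₂ne, hl₂mem, hl₂⟩⟩
    refine ⟨l₁.map (fun x => ((x, 0) : L₁ × L₂)) ++ l₂.map (fun y => ((0, y) : L₁ × L₂)),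
      ?_, ?_, ?_⟩
    · simp [hl₁ne]
    · intro w hw
      rcases List.mem_append.1 hw with hw | hw
      · obtain ⟨x, hx, rfl⟩ := List.mem_map.1 hw
        obtain ⟨hx1, hx2⟩ := hl₁mem x hx
        refine ⟨⟨hx1, (V₂ 1).zero_mem⟩, ?_⟩
        have : lam ((x, 0) : L₁ × L₂) = lam₁ x := by
          simp [hlam₁]
        rw [this]
        exact hf₁pos x hx1 hx2
      · obtain ⟨y, hy, rfl⟩ := List.mem_map.1 hw
        obtain ⟨hy1, hy2⟩ := hl₂mem y hy
        refine ⟨⟨(V₁ 1).zero_mem, hy1⟩, ?_⟩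
        have : lam ((0, y) : L₁ × L₂) = lam₂ y := by
          simp [hlam₂]
        rw [this]
        exact hf₂pos y hy1 hy2
    · rw [List.foldr_append, foldr_map_inr mul₁ mul₂ hm₁.zero_mul,
        foldr_map_inl mul₁ mul₂ hm₂.zero_mul]
      have h0 : ((0 : L₁ × L₂).1, l₂.foldr mul₂ (0 : L₁ × L₂).2) = ((0 : L₁), b) := by
        simp [hl₂]
      rw [h0]
      simp [hl₁]
  have : z ∈ closure ((genSemigroup mul₁ {v : L₁ | v ∈ V₁ 1 ∧ 0 ≤ f₁ v}) ×ˢ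
      (genSemigroup mul₂ {v : L₂ | v ∈ V₂ 1 ∧ 0 ≤ f₂ v})) := by
    rw [closure_prod_eq]
    exact ⟨hz₁, hz₂⟩
  exact closure_mono hsub this
end

section
/- For n ≥ 2, the n-th Engel-type algebra cannot be prolonged: if g is a stratified Lie algebra such that g/(V_4 ⊕ ... ⊕ V_s) is isomorphic to En^n with n ≥ 2, then V_4(g) = {0}, so g ≅ En^n. Concretely: if a step-≥3 stratified Lie algebra g has elements X, Y_1,...,Y_n, T_1,...,T_n, Z spanning V_1, V_2, V_3 with brackets [Y_i,X]=T_i, [Y_i,Y_j]=0, [Y_j,T_i]=δ_{ij}Z, [X,T_i]=0 modulo V_4 ⊕ ... ⊕ V_s, then [X,Z] = 0 and [Y_j,Z] = 0 for all j, hence V_4 = {0}. -/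
/-- The part `V 4 ⊕ V 5 ⊕ ⋯` of a stratified Lie algebra. -/
def highLayers {L : Type} [LieRing L] [LieAlgebra ℝ L]
    (V : ℕ → Submodule ℝ L) : Submodule ℝ L :=
  ⨆ (j : ℕ) (_ : 4 ≤ j), V j

/-- For `n ≥ 2`, the `n`-th Engel-type algebra cannot be prolonged: if a stratified Lie
algebra `g` of step `≥ 3` has elements `X, Y₁,…,Yₙ, T₁,…,Tₙ, Z` spanning `V₁, V₂, V₃`
with brackets `[Yᵢ,X] = Tᵢ`, `[Yᵢ,Yⱼ] = 0`, `[Yⱼ,Tᵢ] = δᵢⱼ Z`, `[X,Tᵢ] = 0` modulo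
`V₄ ⊕ ⋯ ⊕ Vₛ`, then `[X,Z] = 0` and `[Yⱼ,Z] = 0` for all `j`, hence `V₄ = 0` (so that
`g ≅ 𝔼𝕟ⁿ`). -/
theorem engel_type_cannot_be_prolonged
    (L : Type) [LieRing L] [LieAlgebra ℝ L]
    (s : ℕ) (V : ℕ → Submodule ℝ L) (hst : IsStratified L s V) (hs : 3 ≤ s)
    (n : ℕ) (hn : 2 ≤ n)
    (X : L) (Y T : Fin n → L) (Z : L)
    (hX : X ∈ V 1) (hY : ∀ i, Y i ∈ V 1) (hT : ∀ i, T i ∈ V 2) (hZ : Z ∈ V 3)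
    (hspan1 : Submodule.span ℝ ({X} ∪ Set.range Y) = V 1)
    (hspan2 : Submodule.span ℝ (Set.range T) = V 2)
    (hspan3 : Submodule.span ℝ {Z} = V 3)
    (hYX : ∀ i, ⁅Y i, X⁆ - T i ∈ highLayers V)
    (hYY : ∀ i j, ⁅Y i, Y j⁆ ∈ highLayers V)
    (hYT : ∀ i j, ⁅Y j, T i⁆ - (if i = j then Z else 0) ∈ highLayers V)
    (hXT : ∀ i, ⁅X, T i⁆ ∈ highLayers V) :
    ⁅X, Z⁆ = 0 ∧ (∀ j, ⁅Y j, Z⁆ = 0) ∧ V 4 = ⊥ :=  by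
  -- high layers are included in the complement of V j for j < 4
  have hhigh : ∀ j : ℕ, j < 4 → highLayers V ≤ ⨆ k, ⨆ _ : k ≠ j, V k := by
    intro j hj
    apply iSup₂_le
    intro i hi
    exact le_iSup₂ (f := fun k (_ : k ≠ j) => V k) i (by omega)
  have hdisj : ∀ j : ℕ, j < 4 → ∀ a ∈ V j, a ∈ highLayers V → a = 0 := by
    intro j hj a haj hah
    exact Submodule.disjoint_def.mp (hst.indep j) a haj (hhigh j hj hah)
  have hV2 : lieSpan (V 1) (V 1) = V 2 := hst.layer 1 le_rfl (by omega)
  have hV3 : lieSpan (V 1) (V 2) = V 3 := hst.layer 2 (by omega) (by omega)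
  -- exact bracket relations
  have eYX : ∀ i, ⁅Y i, X⁆ = T i := by
    intro i
    have hm : ⁅Y i, X⁆ ∈ V 2 := by
      rw [← hV2]; exact Submodule.subset_span ⟨Y i, hY i, X, hX, rfl⟩
    have := hdisj 2 (by omega) _ (sub_mem hm (hT i)) (hYX i)
    exact sub_eq_zero.mp this
  have eYY : ∀ i j, ⁅Y i, Y j⁆ = 0 := by
    intro i j
    have hm : ⁅Y i, Y j⁆ ∈ V 2 := by
      rw [← hV2]; exact Submodule.subset_span ⟨Y i, hY i, Y j, hY j, rfl⟩
    exact hdisj 2 (by omega) _ hm (hYY i j)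
  have eYT : ∀ i j, ⁅Y j, T i⁆ = if i = j then Z else 0 := by
    intro i j
    have hm : ⁅Y j, T i⁆ ∈ V 3 := by
      rw [← hV3]; exact Submodule.subset_span ⟨Y j, hY j, T i, hT i, rfl⟩
    have hm' : (if i = j then Z else 0) ∈ V 3 := by
      split_ifs; exacts [hZ, zero_mem _]
    have := hdisj 3 (by omega) _ (sub_mem hm hm') (hYT i j)
    exact sub_eq_zero.mp this
  have eXT : ∀ i, ⁅X, T i⁆ = 0 := by
    intro i
    have hm : ⁅X, T i⁆ ∈ V 3 := by
      rw [← hV3]; exact Submodule.subset_span ⟨X, hX, T i, hT i, rfl⟩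
    exact hdisj 3 (by omega) _ hm (hXT i)
  have eZ : ∀ i, ⁅Y i, T i⁆ = Z := by
    intro i; rw [eYT i i, if_pos rfl]
  -- Jacobi computations
  have hXZ : ⁅X, Z⁆ = 0 := by
    have i0 : Fin n := ⟨0, by omega⟩
    rw [← eZ i0, leibniz_lie, eXT, lie_zero, add_zero,
      show ⁅X, Y i0⁆ = -T i0 by rw [← lie_skew, eYX], neg_lie, lie_self, neg_zero]
  have hYZ : ∀ j, ⁅Y j, Z⁆ = 0 := by
    intro j
    have h0 : (0 : ℕ) < n := by omega
    have h1 : (1 : ℕ) < n := by omega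
    obtain ⟨i, hne⟩ : ∃ i : Fin n, i ≠ j := by
      rcases eq_or_ne j ⟨0, h0⟩ with h | h
      · refine ⟨⟨1, h1⟩, ?_⟩
        rw [h]
        intro hc
        exact absurd (congrArg Fin.val hc) (by simp)
      · exact ⟨⟨0, h0⟩, fun hc => h hc.symm⟩
    rw [← eZ i, leibniz_lie, eYY, zero_lie, zero_add, eYT, if_neg hne, lie_zero]
  refine ⟨hXZ, hYZ, ?_⟩
  -- V 4 = ⊥
  by_cases h4 : s < 4
  · exact hst.gt_bot 4 h4
  · have hlayer := hst.layer 3 (by omega) (by omega)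
    rw [show (4 : ℕ) = 3 + 1 from rfl, ← hlayer, eq_bot_iff]
    apply Submodule.span_le.mpr
    rintro z ⟨x, hx, y, hy, rfl⟩
    have hxZ : ⁅x, Z⁆ = 0 := by
      rw [← hspan1] at hx
      induction hx using Submodule.span_induction with
      | mem w hw =>
        rcases hw with hw | ⟨i, rfl⟩
        · rw [Set.mem_singleton_iff] at hw; rw [hw]; exact hXZ
        · exact hYZ i
      | zero => simp
      | add a b _ _ ha hb => rw [add_lie, ha, hb, add_zero]
      | smul c a _ ha => rw [smul_lie, ha, smul_zero]
    rw [← hspan3] at hy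
    obtain ⟨c, rfl⟩ := Submodule.mem_span_singleton.mp hy
    simp [lie_smul, hxZ]
end

section
/- Let n ≥ 2 and consider the n-th Engel-type algebra with basis {X, Y_1,...,Y_n} of V_1 satisfying the defining relations. For ν ∈ V_1 \ {0}, the conditions ad_ν(V_1) = V_2 and ad_ν^2(V_1) = V_3 hold if and only if ν ∉ span{Y_1,...,Y_n} ∪ ℝX. -/
/-!
Write `ν = aX + ∑ bᵢYᵢ`. On `V₁` one computes `ad_ν (cX + ∑ dᵢYᵢ) = ∑ (c bᵢ - a dᵢ) Tᵢ` and
`ad_ν² (cX + ∑ dᵢYᵢ) = ⟪b, c b - a d⟫ Z`. If `a ≠ 0` the first image is all of `V₂`; if `a = 0` it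
lies on the line `ℝ ∑ bᵢTᵢ`, which cannot be `V₂` once `n ≥ 2`. The second image contains `|b|² Z`
and vanishes when `b = 0`, so it is `V₃` exactly when `b ≠ 0`. Finally `ν ∈ span{Yᵢ}` iff `a = 0`
and `ν ∈ ℝX` iff `b = 0`.
-/

open Submodule

theorem exists_single_notMem_span_singleton {K : Type*} [Field K] {n : ℕ} (hn : 2 ≤ n)
    (w : Fin n → K) : ∃ i, Pi.single i 1 ∉ K ∙ w := by
  by_contra! h
  have htop : K ∙ w = ⊤ := by
    rw [eq_top_iff, ← (Pi.basisFun K (Fin n)).span_eq, span_le]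
    rintro _ ⟨i, rfl⟩
    simpa using h i
  have := finrank_le_one w fun x => mem_span_singleton.1 (htop ▸ mem_top)
  rw [Module.finrank_fin_fun] at this
  omega

namespace EngelVec

variable {n : ℕ}

theorem lie_def_s19 (u v : EngelVec n) :
    ⁅u, v⁆ = (0, 0, v.1 • u.2.1 - u.1 • v.2.1, u.2.1 ⬝ᵥ v.2.2.1 - v.2.1 ⬝ᵥ u.2.2.1) := by
  change engelBracket n u v = _
  ext <;> simp [engelBracket, dotProduct, mul_comm]

theorem mk_mem_engelYspan (d : Fin n → ℝ) : ((0, d, 0, 0) : EngelVec n) ∈ engelYspan n := by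
  have : ((0, d, 0, 0) : EngelVec n) = ∑ i, d i • engelY n i := by
    ext <;> simp [engelY, Prod.fst_sum, Prod.snd_sum, Finset.sum_apply, Pi.single_apply]
  rw [this]
  exact sum_mem fun i _ => smul_mem _ _ (subset_span ⟨i, rfl⟩)

theorem mk_mem_engelV2 (e : Fin n → ℝ) : ((0, 0, e, 0) : EngelVec n) ∈ engelV2 n := by
  have : ((0, 0, e, 0) : EngelVec n) = ∑ i, e i • engelT n i := by
    ext <;> simp [engelT, Prod.fst_sum, Prod.snd_sum, Finset.sum_apply, Pi.single_apply]
  rw [this]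
  exact sum_mem fun i _ => smul_mem _ _ (subset_span ⟨i, rfl⟩)

theorem mk_mem_engelV3 (s : ℝ) : ((0, 0, 0, s) : EngelVec n) ∈ engelV3 n :=
  mem_span_singleton.2 ⟨s, by ext <;> simp [engelZ]⟩

theorem mem_span_engelX_iff {v : EngelVec n} : v ∈ ℝ ∙ engelX n ↔ v.2.1 = 0 ∧ v.2.2 = 0 := by
  rw [mem_span_singleton]
  constructor
  · rintro ⟨c, rfl⟩
    simp [engelX]
  · rintro ⟨h1, h2⟩
    exact ⟨v.1, by ext <;> simp [engelX, h1, h2]⟩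

theorem mem_engelV1_iff {v : EngelVec n} : v ∈ engelV1 n ↔ v.2.2 = 0 := by
  constructor
  · intro hv
    induction hv using span_induction with
    | mem x hx => rcases hx with rfl | ⟨i, rfl⟩ <;> rfl
    | zero => rfl
    | add x y _ _ hx hy => simp [hx, hy]
    | smul c x _ hx => simp [hx]
  · intro h
    have hv : v = v.1 • engelX n + (0, v.2.1, 0, 0) := by ext <;> simp [engelX, h]
    rw [hv, engelV1, span_union]
    exact add_mem_sup (smul_mem _ _ (mem_span_singleton_self _)) (mk_mem_engelYspan _)

theorem mem_engelYspan_iff {v : EngelVec n} : v ∈ engelYspan n ↔ v.1 = 0 ∧ v.2.2 = 0 := by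
  constructor
  · intro hv
    induction hv using span_induction with
    | mem x hx => obtain ⟨i, rfl⟩ := hx; exact ⟨rfl, rfl⟩
    | zero => exact ⟨rfl, rfl⟩
    | add x y _ _ hx hy => simp [hx, hy]
    | smul c x _ hx => simp [hx]
  · rintro ⟨h1, h2⟩
    have hv : v = (0, v.2.1, 0, 0) := by ext <;> simp [h1, h2]
    exact hv ▸ mk_mem_engelYspan _

theorem lie_of_mem_engelV1 {u v : EngelVec n} (hu : u ∈ engelV1 n) (hv : v ∈ engelV1 n) :
    ⁅u, v⁆ = (0, 0, v.1 • u.2.1 - u.1 • v.2.1, 0) := by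
  rw [lie_def_s19, mem_engelV1_iff.1 hu, mem_engelV1_iff.1 hv]
  simp

theorem lie_mk_engelV2 (u : EngelVec n) (e : Fin n → ℝ) :
    ⁅u, ((0, 0, e, 0) : EngelVec n)⁆ = (0, 0, 0, u.2.1 ⬝ᵥ e) := by
  simp [lie_def_s19]

theorem notMem_engelYspan_union_span_engelX_iff {ν : EngelVec n} (hν : ν ∈ engelV1 n) :
    ν ∉ ((engelYspan n : Set (EngelVec n)) ∪ (ℝ ∙ engelX n : Set (EngelVec n))) ↔
      ν.1 ≠ 0 ∧ ν.2.1 ≠ 0 := by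
  simp [mem_engelYspan_iff, mem_span_engelX_iff, mem_engelV1_iff.1 hν]

theorem span_lie_engelV1_eq_engelV2_iff (hn : 2 ≤ n) {ν : EngelVec n} (hν : ν ∈ engelV1 n) :
    span ℝ {w | ∃ v ∈ engelV1 n, ⁅ν, v⁆ = w} = engelV2 n ↔ ν.1 ≠ 0 := by
  constructor
  · intro h ha
    have hle : span ℝ {w | ∃ v ∈ engelV1 n, ⁅ν, v⁆ = w} ≤
        ℝ ∙ ((0, 0, ν.2.1, 0) : EngelVec n) := by
      refine span_le.2 ?_
      rintro _ ⟨v, hv, rfl⟩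
      exact mem_span_singleton.2 ⟨v.1, by simp [lie_of_mem_engelV1 hν hv, ha]⟩
    obtain ⟨i, hi⟩ := exists_single_notMem_span_singleton hn ν.2.1
    have hT : engelT n i ∈ engelV2 n := subset_span ⟨i, rfl⟩
    obtain ⟨t, ht⟩ := mem_span_singleton.1 (hle (h ▸ hT))
    exact hi (mem_span_singleton.2 ⟨t, by simpa [engelT] using congrArg (·.2.2.1) ht⟩)
  · intro ha
    apply le_antisymm
    · refine span_le.2 ?_
      rintro _ ⟨v, hv, rfl⟩
      rw [lie_of_mem_engelV1 hν hv]
      exact mk_mem_engelV2 _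
    · refine span_le.2 ?_
      rintro _ ⟨i, rfl⟩
      have hY : -ν.1⁻¹ • engelY n i ∈ engelV1 n := smul_mem _ _ (subset_span (.inr ⟨i, rfl⟩))
      refine subset_span ⟨_, hY, ?_⟩
      rw [lie_of_mem_engelV1 hν hY]
      ext <;> simp [engelY, engelT, ha]

theorem span_lie_lie_engelV1_eq_engelV3_iff {ν : EngelVec n} (hν : ν ∈ engelV1 n) :
    span ℝ {w | ∃ v ∈ engelV1 n, ⁅ν, ⁅ν, v⁆⁆ = w} = engelV3 n ↔ ν.2.1 ≠ 0 := by
  have hlie : ∀ v ∈ engelV1 n,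
      ⁅ν, ⁅ν, v⁆⁆ = (0, 0, 0, ν.2.1 ⬝ᵥ (v.1 • ν.2.1 - ν.1 • v.2.1)) := fun v hv => by
    rw [lie_of_mem_engelV1 hν hv, lie_mk_engelV2]
  constructor
  · intro h hb
    have hbot : span ℝ {w | ∃ v ∈ engelV1 n, ⁅ν, ⁅ν, v⁆⁆ = w} = ⊥ := by
      refine eq_bot_iff.2 (span_le.2 ?_)
      rintro _ ⟨v, hv, rfl⟩
      simp [hlie v hv, hb]
    have hZ : engelZ n ∈ engelV3 n := mem_span_singleton_self _
    rw [← h, hbot, mem_bot] at hZ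
    exact one_ne_zero (congrArg (·.2.2.2) hZ)
  · intro hb
    apply le_antisymm
    · refine span_le.2 ?_
      rintro _ ⟨v, hv, rfl⟩
      rw [hlie v hv]
      exact mk_mem_engelV3 _
    · have hX : engelX n ∈ engelV1 n := subset_span (.inl rfl)
      have hbb : ν.2.1 ⬝ᵥ ν.2.1 ≠ 0 := mt dotProduct_self_eq_zero.1 hb
      refine span_le.2 (Set.singleton_subset_iff.2 ?_)
      have hZ : engelZ n = (ν.2.1 ⬝ᵥ ν.2.1)⁻¹ • ⁅ν, ⁅ν, engelX n⁆⁆ := by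
        rw [hlie _ hX]
        ext <;> simp [engelX, engelZ, hbb]
      rw [hZ]
      exact smul_mem _ _ (subset_span ⟨_, hX, rfl⟩)

end EngelVec

theorem engel_nonabnormal_lines_general (n : ℕ) (hn : 2 ≤ n) (ν : EngelVec n)
    (hν : ν ∈ engelV1 n) :
    (Submodule.span ℝ {w : EngelVec n | ∃ v ∈ engelV1 n, ⁅ν, v⁆ = w} = engelV2 n ∧
     Submodule.span ℝ {w : EngelVec n | ∃ v ∈ engelV1 n, ⁅ν, ⁅ν, v⁆⁆ = w} = engelV3 n) ↔
    ν ∉ ((engelYspan n : Set (EngelVec n)) ∪ (Submodule.span ℝ {engelX n} : Set (EngelVec n))) := by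
  rw [EngelVec.span_lie_engelV1_eq_engelV2_iff hn hν,
    EngelVec.span_lie_lie_engelV1_eq_engelV3_iff hν, EngelVec.notMem_engelYspan_union_span_engelX_iff hν]

/-- For `n ≥ 2` and `ν ∈ V₁ \ {0}` in the `n`-th Engel-type algebra, the conditions
`ad_ν(V₁) = V₂` and `ad_ν²(V₁) = V₃` hold if and only if
`ν ∉ span{Y₁,…,Yₙ} ∪ ℝX` (characterization of non-abnormal horizontal lines). -/
theorem engel_nonabnormal_lines (n : ℕ) (hn : 2 ≤ n) (ν : EngelVec n)
    (hν : ν ∈ engelV1 n) (hν0 : ν ≠ 0) :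
    (Submodule.span ℝ {w : EngelVec n | ∃ v ∈ engelV1 n, ⁅ν, v⁆ = w} = engelV2 n ∧
     Submodule.span ℝ {w : EngelVec n | ∃ v ∈ engelV1 n, ⁅ν, ⁅ν, v⁆⁆ = w} = engelV3 n) ↔
    ν ∉ ((engelYspan n : Set (EngelVec n)) ∪ (Submodule.span ℝ {engelX n} : Set (EngelVec n))) :=
  engel_nonabnormal_lines_general n hn ν hν
end
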